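/- Let G be a simple graph on n vertices with maximum degree at most d, let u, v be vertices of G, let t ≥ 0 be an integer, and let 0 < ε ≤ 1. If q_u^t and q_v^t are ε-close to collinear, then the smallest eigenvalue of the 2×2 symmetric matrix A_{u,v} is at most 10ε. -/

import Mathlib

open scoped RealInnerProductSpace

open scoped Classical in
/-- The lazy random walk matrix of a graph `G` with degree parameter `d`. -/
noncomputable def lazyWalk {n : ℕ} (G : SimpleGraph (Fin n)) (d : ℕ) :
    Matrix (Fin n) (Fin n) ℝ :=
  Matrix.of fun u v =>
    if u = v then 1 - ((G.neighborSet u).ncard : ℝ) / (2 * d)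
    else if G.Adj u v then 1 / (2 * d) else 0

/-- `G` has maximum degree at most `d`. -/
def MaxDegreeLE {n : ℕ} (G : SimpleGraph (Fin n)) (d : ℕ) : Prop :=
  ∀ v, (G.neighborSet v).ncard ≤ d

/-- `p_u^t`: the endpoint distribution of a length-`t` lazy random walk from `u`. -/
noncomputable def pvec {n : ℕ} (G : SimpleGraph (Fin n)) (d t : ℕ) (u : Fin n) :
    EuclideanSpace ℝ (Fin n) :=
  WithLp.toLp 2 fun v => ((lazyWalk G d ^ t).mulVec fun w => if w = u then 1 else 0) v

/-- `q_u^t = p_u^t - (1/n) 𝟙`. -/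
noncomputable def qvec {n : ℕ} (G : SimpleGraph (Fin n)) (d t : ℕ) (u : Fin n) :
    EuclideanSpace ℝ (Fin n) :=
  WithLp.toLp 2 fun v => pvec G d t u v - 1 / n

/-- `q_u^0 = 1_u - (1/n) 𝟙`. -/
noncomputable def qzero {n : ℕ} (u : Fin n) : EuclideanSpace ℝ (Fin n) :=
  WithLp.toLp 2 fun v => (if v = u then 1 else 0) - 1 / n

/-- average of `q_u^0` over `u ∈ S`. -/
noncomputable def qavg {n : ℕ} (S : Finset (Fin n)) : EuclideanSpace ℝ (Fin n) :=
  (S.card : ℝ)⁻¹ • ∑ u ∈ S, qzero u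

/-- `a` and `b` are `ε`-close to collinear. -/
def CloseCollinear {E : Type*} [NormedAddCommGroup E] [NormedSpace ℝ E]
    (ε : ℝ) (a b : E) : Prop :=
  ∃ (ea eb w : E) (s s' : ℝ),
    ‖ea‖ ≤ ε ∧ ‖eb‖ ≤ ε ∧ a + ea = s • w ∧ b + eb = s' • w

/-- `a` and `b` are `ε`-close to antipodal. -/
def CloseAntipodal {E : Type*} [NormedAddCommGroup E] [NormedSpace ℝ E]
    (ε : ℝ) (a b : E) : Prop :=
  ∃ (ea eb w : E) (s s' : ℝ), 0 ≤ s ∧ 0 ≤ s' ∧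
    ‖ea‖ ≤ ε ∧ ‖eb‖ ≤ ε ∧ a + ea = s • w ∧ b + eb = -(s' • w)

/-- `a` and `b` are `ε`-close to podal. -/
def ClosePodal {E : Type*} [NormedAddCommGroup E] [NormedSpace ℝ E]
    (ε : ℝ) (a b : E) : Prop :=
  ∃ (ea eb w : E) (s s' : ℝ), 0 ≤ s ∧ 0 ≤ s' ∧
    ‖ea‖ ≤ ε ∧ ‖eb‖ ≤ ε ∧ a + ea = s • w ∧ b + eb = s' • w

/-- The Gram matrix `A_{u,v}` of two vectors. -/
noncomputable def gram2 {n : ℕ} (a b : EuclideanSpace ℝ (Fin n)) :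
    Matrix (Fin 2) (Fin 2) ℝ :=
  !![‖a‖ ^ 2, ⟪a, b⟫; ⟪b, a⟫, ‖b‖ ^ 2]

/-- Number of edges of `G` between `S` and `C \ S` (for `S ⊆ C`). -/
noncomputable def cutEdgesIn {n : ℕ} (G : SimpleGraph (Fin n)) (C S : Finset (Fin n)) : ℕ :=
  {p : Fin n × Fin n | p.1 ∈ S ∧ p.2 ∈ C ∧ p.2 ∉ S ∧ G.Adj p.1 p.2}.ncard

/-- Number of edges of `G` between `S` and its complement. -/
noncomputable def cutEdges {n : ℕ} (G : SimpleGraph (Fin n)) (S : Finset (Fin n)) : ℕ :=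
  cutEdgesIn G Finset.univ S

/-- The cut conductance `φ_G(S) = e(S, V∖S) / (d|S|)`. -/
noncomputable def cutCond {n : ℕ} (G : SimpleGraph (Fin n)) (d : ℕ) (S : Finset (Fin n)) : ℝ :=
  (cutEdges G S : ℝ) / (d * S.card)

/-- The (inner) conductance of the induced subgraph `G[C]` is at least `φ`. -/
def InnerConductanceGE {n : ℕ} (G : SimpleGraph (Fin n)) (d : ℕ) (C : Finset (Fin n))
    (φ : ℝ) : Prop :=
  ∀ S ⊆ C, S.Nonempty → 2 * S.card ≤ C.card →
    φ ≤ (cutEdgesIn G C S : ℝ) / (d * S.card)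

/-- `G` is `(2, φ)`-clusterable. -/
def Clusterable2 {n : ℕ} (G : SimpleGraph (Fin n)) (d : ℕ) (φ : ℝ) : Prop :=
  InnerConductanceGE G d Finset.univ φ ∨
  ∃ C₁ C₂ : Finset (Fin n), C₁.Nonempty ∧ C₂.Nonempty ∧ Disjoint C₁ C₂ ∧
    C₁ ∪ C₂ = Finset.univ ∧ InnerConductanceGE G d C₁ φ ∧ InnerConductanceGE G d C₂ φ

/-- `G` is `ε`-far from `(2, φ)`-clusterable. -/
def FarFromClusterable2 {n : ℕ} (G : SimpleGraph (Fin n)) (d : ℕ) (ε φ : ℝ) : Prop :=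
  ∀ G' : SimpleGraph (Fin n), MaxDegreeLE G' d →
    ((symmDiff G.edgeSet G'.edgeSet).ncard : ℝ) ≤ ε * d * n →
    ¬ Clusterable2 G' d φ

/-- The span of the eigenvectors of `M` with eigenvalue greater than `c`. -/
noncomputable def heavySpace {n : ℕ} (M : Matrix (Fin n) (Fin n) ℝ) (c : ℝ) :
    Submodule ℝ (EuclideanSpace ℝ (Fin n)) :=
  ⨆ μ : {μ : ℝ // c < μ}, Module.End.eigenspace (Matrix.toEuclideanLin M) (μ : ℝ)

/-- Orthogonal projection onto the span of the eigenvectors of `M` with eigenvalue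
greater than `c`. -/
noncomputable def heavyProj {n : ℕ} (M : Matrix (Fin n) (Fin n) ℝ) (c : ℝ)
    (x : EuclideanSpace ℝ (Fin n)) : EuclideanSpace ℝ (Fin n) :=
  ((heavySpace M c).orthogonalProjectionOnto x : EuclideanSpace ℝ (Fin n))

/-! If `a + e_a` and `b + e_b` lie on one line, some unit vector `y ∈ ℝ²` kills their
coefficients along that line, so `y₀ • a + y₁ • b = -(y₀ • e_a + y₁ • e_b)` has norm at most `2ε`.
For the Gram matrix `A` of `a, b` we have `yᵀ A y = ‖y₀ • a + y₁ • b‖²`, and the minimum of the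
Rayleigh quotient of a symmetric matrix is one of its eigenvalues; hence `A` has an eigenvalue
`≤ 4ε² ≤ 10ε`. -/

section

open Matrix

theorem exists_sq_add_sq_eq_one_mul_add_mul_eq_zero (s s' : ℝ) :
    ∃ y₀ y₁ : ℝ, y₀ ^ 2 + y₁ ^ 2 = 1 ∧ y₀ * s + y₁ * s' = 0 := by
  set z : ℂ := ⟨s, s'⟩
  refine ⟨-Real.sin z.arg, Real.cos z.arg, by simp [Real.sin_sq_add_cos_sq], ?_⟩
  have hre : ‖z‖ * Real.cos z.arg = s := Complex.norm_mul_cos_arg z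
  have him : ‖z‖ * Real.sin z.arg = s' := Complex.norm_mul_sin_arg z
  rw [← hre, ← him]
  ring

theorem CloseCollinear.exists_norm_smul_add_smul_le {E : Type*} [NormedAddCommGroup E]
    [NormedSpace ℝ E] {ε : ℝ} {a b : E} (h : CloseCollinear ε a b) :
    ∃ y₀ y₁ : ℝ, y₀ ^ 2 + y₁ ^ 2 = 1 ∧ ‖y₀ • a + y₁ • b‖ ≤ 2 * ε := by
  obtain ⟨ea, eb, w, s, s', hea, heb, ha, hb⟩ := h
  obtain ⟨y₀, y₁, hy, hys⟩ := exists_sq_add_sq_eq_one_mul_add_mul_eq_zero s s'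
  refine ⟨y₀, y₁, hy, ?_⟩
  have hkill : y₀ • (a + ea) + y₁ • (b + eb) = 0 := by
    rw [ha, hb, smul_smul, smul_smul, ← add_smul, hys, zero_smul]
  have hcomb : y₀ • a + y₁ • b = -(y₀ • ea + y₁ • eb) := by
    linear_combination (norm := module) hkill
  have hy₀ : |y₀| ≤ 1 := abs_le_one_iff_mul_self_le_one.mpr (by nlinarith)
  have hy₁ : |y₁| ≤ 1 := abs_le_one_iff_mul_self_le_one.mpr (by nlinarith)
  have hε : 0 ≤ ε := (norm_nonneg _).trans hea
  calc ‖y₀ • a + y₁ • b‖ = ‖y₀ • ea + y₁ • eb‖ := by rw [hcomb, norm_neg]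
    _ ≤ |y₀| * ε + |y₁| * ε := by
      refine norm_add_le_of_le ?_ ?_ <;> rw [norm_smul, Real.norm_eq_abs] <;> gcongr
    _ ≤ 1 * ε + 1 * ε := by gcongr
    _ = 2 * ε := by ring

theorem Matrix.IsHermitian.exists_mulVec_eq_smul_le {ι : Type*} [Fintype ι] [DecidableEq ι]
    [Nonempty ι] {A : Matrix ι ι ℝ} (hA : A.IsHermitian) :
    ∃ (μ : ℝ) (x : ι → ℝ), x ≠ 0 ∧ A *ᵥ x = μ • x ∧ ∀ y, μ * (y ⬝ᵥ y) ≤ y ⬝ᵥ A *ᵥ y := by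
  set T := A.toEuclideanLin
  set R := fun x : {x : EuclideanSpace ℝ ι // x ≠ 0} => ⟪T x, x⟫ / ‖(x : EuclideanSpace ℝ ι)‖ ^ 2
  have hT : T.IsSymmetric := isSymmetric_toEuclideanLin_iff.mpr hA
  obtain ⟨x, hx⟩ := hT.hasEigenvalue_iInf_of_finiteDimensional.exists_hasEigenvector
  refine ⟨⨅ x, R x, x.ofLp, by simpa using hx.2, ?_, fun y => ?_⟩
  · simpa [T] using congrArg WithLp.ofLp hx.apply_eq_smul
  rcases eq_or_ne y 0 with rfl | hy
  · simp
  have hbdd : BddBelow (Set.range R) := by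
    refine ⟨-‖LinearMap.toContinuousLinearMap T‖, ?_⟩
    rintro _ ⟨x, rfl⟩
    exact neg_le_of_abs_le ((LinearMap.toContinuousLinearMap T).rayleighQuotient_le_norm x)
  set z : EuclideanSpace ℝ ι := WithLp.toLp 2 y
  have hz : z ≠ 0 := by simpa [z] using hy
  have hnorm : ‖z‖ ^ 2 = y ⬝ᵥ y := by
    rw [EuclideanSpace.real_norm_sq_eq]
    simp [z, dotProduct, sq]
  have hinner : ⟪T z, z⟫ = y ⬝ᵥ A *ᵥ y := by
    simp [T, z, EuclideanSpace.inner_eq_star_dotProduct]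
  have := ciInf_le hbdd ⟨z, hz⟩
  rwa [le_div_iff₀ (by positivity), hnorm, hinner] at this

theorem Matrix.dotProduct_gram_mulVec_self {ι E : Type*} [Fintype ι] [NormedAddCommGroup E]
    [InnerProductSpace ℝ E] (v : ι → E) (y : ι → ℝ) :
    y ⬝ᵥ gram ℝ v *ᵥ y = ‖∑ i, y i • v i‖ ^ 2 := by
  rw [← real_inner_self_eq_norm_sq, ← star_dotProduct_gram_mulVec, star_trivial]

theorem gram2_eq_gram {n : ℕ} (a b : EuclideanSpace ℝ (Fin n)) :
    gram2 a b = gram ℝ ![a, b] := by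
  ext i j
  fin_cases i <;> fin_cases j <;> simp [gram2, gram_apply]

theorem CloseCollinear.exists_eigenvalue_gram2_le {n : ℕ} {a b : EuclideanSpace ℝ (Fin n)}
    {ε : ℝ} (hε : ε ≤ 1) (h : CloseCollinear ε a b) :
    ∃ (μ : ℝ) (x : Fin 2 → ℝ), x ≠ 0 ∧ gram2 a b *ᵥ x = μ • x ∧ μ ≤ 10 * ε := by
  obtain ⟨y₀, y₁, hy, hsmall⟩ := h.exists_norm_smul_add_smul_le
  rw [gram2_eq_gram]
  obtain ⟨μ, x, hx, hAx, hμ⟩ := (isHermitian_gram ℝ ![a, b]).exists_mulVec_eq_smul_le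
  refine ⟨μ, x, hx, hAx, ?_⟩
  have hε0 : 0 ≤ ε := by linarith [(norm_nonneg _).trans hsmall]
  have hray := hμ ![y₀, y₁]
  have hyy : ![y₀, y₁] ⬝ᵥ ![y₀, y₁] = 1 := by simp [dotProduct, ← sq, hy]
  rw [hyy, mul_one, dotProduct_gram_mulVec_self, Fin.sum_univ_two] at hray
  calc μ ≤ ‖y₀ • a + y₁ • b‖ ^ 2 := hray
    _ ≤ (2 * ε) ^ 2 := by gcongr
    _ ≤ 10 * ε := by nlinarith

end

open Matrix in
theorem stmt0_general {n d : ℕ} (G : SimpleGraph (Fin n))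
    (u v : Fin n) (t : ℕ) (ε : ℝ) (hε1 : ε ≤ 1)
    (h : CloseCollinear ε (qvec G d t u) (qvec G d t v)) :
    ∃ (μ : ℝ) (x : Fin 2 → ℝ), x ≠ 0 ∧
      (gram2 (qvec G d t u) (qvec G d t v)).mulVec x = μ • x ∧ μ ≤ 10 * ε :=
  h.exists_eigenvalue_gram2_le hε1

open Matrix in
theorem stmt0 {n d : ℕ} (hd : 1 ≤ d) (G : SimpleGraph (Fin n)) (hdeg : MaxDegreeLE G d)
    (u v : Fin n) (t : ℕ) (ε : ℝ) (hε0 : 0 < ε) (hε1 : ε ≤ 1)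
    (h : CloseCollinear ε (qvec G d t u) (qvec G d t v)) :
    ∃ (μ : ℝ) (x : Fin 2 → ℝ), x ≠ 0 ∧
      (gram2 (qvec G d t u) (qvec G d t v)).mulVec x = μ • x ∧ μ ≤ 10 * ε :=
  stmt0_general G u v t ε hε1 h
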